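/- arXiv:2311.02544 — 6 statements merged into one kernel-verified Lean document; each statement's English description precedes it below -/
import Mathlib

section
/- For every history-dependent policy π, every state s ∈ S, every vector v : Fin d → ℝ, every history h ∈ List (S × A), and every t with 0 ≤ t ≤ T, we have V^π(s, v, h, t) ≤ V*(s, v, t). -/
/-- The optimal value function `V*` of an MOMDP, defined by backward recursion on the
number `t` of remaining steps:  `V*(s, v, 0) = W v` and
`V*(s, v, t) = max_a ∑_{s'} P s a s' · V*(s', v + γ^{T−t} • R s a, t − 1)` for `t ≥ 1`. -/
noncomputable def Vstar {S A : Type} [Fintype S] [Fintype A] [Nonempty A] {d : ℕ}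
    (P : S → A → S → ℝ) (R : S → A → Fin d → ℝ) (γ : ℝ) (T : ℕ)
    (W : (Fin d → ℝ) → ℝ) : ℕ → S → (Fin d → ℝ) → ℝ
  | 0, _, v => W v
  | t + 1, s, v => Finset.univ.sup' Finset.univ_nonempty fun a : A =>
      ∑ s' : S, P s a s' * Vstar P R γ T W t s' (v + γ ^ (T - (t + 1)) • R s a)

/-- The value function `V^π(s, v, h, t)` of a history-dependent policy `π`, defined by
recursion: `V^π(s, v, h, 0) = W v` and, for `t ≥ 1`,
`V^π(s, v, h, t) = ∑_a π h s t a · ∑_{s'} P s a s' · V^π(s', v + γ^{T−t} • R s a, h ++ [(s,a)], t−1)`. -/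
noncomputable def Vpol {S A : Type} [Fintype S] [Fintype A] {d : ℕ}
    (P : S → A → S → ℝ) (R : S → A → Fin d → ℝ) (γ : ℝ) (T : ℕ)
    (W : (Fin d → ℝ) → ℝ) (pol : List (S × A) → S → ℕ → A → ℝ) :
    ℕ → S → (Fin d → ℝ) → List (S × A) → ℝ
  | 0, _, v, _ => W v
  | t + 1, s, v, h => ∑ a : A, pol h s (t + 1) a *
      ∑ s' : S, P s a s' *
        Vpol P R γ T W pol t s' (v + γ ^ (T - (t + 1)) • R s a) (h ++ [(s, a)])

/-- For every history-dependent policy `π`, every state `s`, vector `v`,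
history `h`, and every `t ≤ T`, we have `V^π(s, v, h, t) ≤ V*(s, v, t)`. -/
theorem Vpol_le_Vstar {S A : Type} [Fintype S] [Fintype A] [Nonempty S] [Nonempty A]
    {d : ℕ} (hd : 1 ≤ d)
    (P : S → A → S → ℝ) (hP0 : ∀ s a s', 0 ≤ P s a s') (hP1 : ∀ s a, ∑ s', P s a s' = 1)
    (R : S → A → Fin d → ℝ) (hR0 : ∀ s a i, 0 ≤ R s a i) (hR1 : ∀ s a i, R s a i ≤ 1)
    (γ : ℝ) (hγ0 : 0 ≤ γ) (hγ1 : γ < 1) (T : ℕ) (W : (Fin d → ℝ) → ℝ)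
    (pol : List (S × A) → S → ℕ → A → ℝ)
    (hpol0 : ∀ h s t a, 0 ≤ pol h s t a)
    (hpol1 : ∀ h s t, ∑ a, pol h s t a = 1)
    (s : S) (v : Fin d → ℝ) (h : List (S × A)) (t : ℕ) (ht : t ≤ T) :
    Vpol P R γ T W pol t s v h ≤ Vstar P R γ T W t s v := by
  induction t generalizing s v h with
  | zero => simp [Vpol, Vstar]
  | succ t ih =>
    rw [Vpol, Vstar]
    calc ∑ a : A, pol h s (t + 1) a *
          ∑ s' : S, P s a s' *
            Vpol P R γ T W pol t s' (v + γ ^ (T - (t + 1)) • R s a) (h ++ [(s, a)])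
        ≤ ∑ a : A, pol h s (t + 1) a *
          ∑ s' : S, P s a s' * Vstar P R γ T W t s' (v + γ ^ (T - (t + 1)) • R s a) := by
          apply Finset.sum_le_sum
          intro a _
          apply mul_le_mul_of_nonneg_left _ (hpol0 _ _ _ _)
          apply Finset.sum_le_sum
          intro s' _
          exact mul_le_mul_of_nonneg_left (ih s' _ _ (Nat.le_of_succ_le ht)) (hP0 _ _ _)
      _ ≤ Finset.univ.sup' Finset.univ_nonempty fun a : A =>
          ∑ s' : S, P s a s' * Vstar P R γ T W t s' (v + γ ^ (T - (t + 1)) • R s a) := by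
          calc ∑ a : A, pol h s (t + 1) a *
                ∑ s' : S, P s a s' * Vstar P R γ T W t s' (v + γ ^ (T - (t + 1)) • R s a)
              ≤ ∑ a : A, pol h s (t + 1) a *
                (Finset.univ.sup' Finset.univ_nonempty fun a : A =>
                  ∑ s' : S, P s a s' * Vstar P R γ T W t s' (v + γ ^ (T - (t + 1)) • R s a)) := by
                apply Finset.sum_le_sum
                intro a _
                exact mul_le_mul_of_nonneg_left
                  (Finset.le_sup' (fun a : A => ∑ s' : S, P s a s' *
                    Vstar P R γ T W t s' (v + γ ^ (T - (t + 1)) • R s a))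
                    (Finset.mem_univ a)) (hpol0 _ _ _ _)
            _ = _ := by rw [← Finset.sum_mul, hpol1, one_mul]
end

section
/- There exists a reward-aware deterministic policy σ : S → (Fin d → ℝ) → ℕ → A such that its value function U_σ, defined by recursion U_σ(s, v, 0) = W(v) and, for 1 ≤ t ≤ T, U_σ(s, v, t) = ∑_{s'} P s (σ s v t) s' · U_σ(s', v + γ^{T−t}·R s (σ s v t), t−1), satisfies U_σ(s, v, t) = V*(s, v, t) for all s ∈ S, v : Fin d → ℝ, and 0 ≤ t ≤ T. -/
/-- The value function `U_σ` of a reward-aware deterministic policy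
`σ : S → (Fin d → ℝ) → ℕ → A`:  `U_σ(s, v, 0) = W v` and, for `t ≥ 1`,
`U_σ(s, v, t) = ∑_{s'} P s (σ s v t) s' · U_σ(s', v + γ^{T−t} • R s (σ s v t), t−1)`. -/
noncomputable def Usigma {S A : Type} [Fintype S] [Fintype A] {d : ℕ}
    (P : S → A → S → ℝ) (R : S → A → Fin d → ℝ) (γ : ℝ) (T : ℕ)
    (W : (Fin d → ℝ) → ℝ) (σ : S → (Fin d → ℝ) → ℕ → A) :
    ℕ → S → (Fin d → ℝ) → ℝ
  | 0, _, v => W v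
  | t + 1, s, v => ∑ s' : S, P s (σ s v (t + 1)) s' *
      Usigma P R γ T W σ t s' (v + γ ^ (T - (t + 1)) • R s (σ s v (t + 1)))

/-- attainment half of extended Bellman optimality.  There exists a
reward-aware deterministic policy `σ : S → (Fin d → ℝ) → ℕ → A` whose value function
`U_σ` satisfies `U_σ(s, v, t) = V*(s, v, t)` for all `s`, `v`, and `0 ≤ t ≤ T`. -/
theorem exists_reward_aware_optimal_policy {S A : Type} [Fintype S] [Fintype A]
    [Nonempty S] [Nonempty A] {d : ℕ} (hd : 1 ≤ d)
    (P : S → A → S → ℝ) (hP0 : ∀ s a s', 0 ≤ P s a s') (hP1 : ∀ s a, ∑ s', P s a s' = 1)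
    (R : S → A → Fin d → ℝ) (hR0 : ∀ s a i, 0 ≤ R s a i) (hR1 : ∀ s a i, R s a i ≤ 1)
    (γ : ℝ) (hγ0 : 0 ≤ γ) (hγ1 : γ < 1) (T : ℕ) (W : (Fin d → ℝ) → ℝ) :
    ∃ σ : S → (Fin d → ℝ) → ℕ → A,
      ∀ (s : S) (v : Fin d → ℝ) (t : ℕ), t ≤ T →
        Usigma P R γ T W σ t s v = Vstar P R γ T W t s v := by
  classical
  choose f hf using fun (s : S) (v : Fin d → ℝ) (t : ℕ) =>
    Finset.exists_mem_eq_sup' (Finset.univ_nonempty (α := A)) fun a : A =>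
      ∑ s' : S, P s a s' * Vstar P R γ T W t s' (v + γ ^ (T - (t + 1)) • R s a)
  refine ⟨fun s v t => f s v (t - 1), fun s v t ht => ?_⟩
  induction t generalizing s v with
  | zero => rfl
  | succ t ih =>
    have key := (hf s v t).2
    simp only [Usigma, Vstar, Nat.add_sub_cancel]
    rw [key]
    exact Finset.sum_congr rfl fun s' _ => by
      rw [ih s' _ (Nat.le_of_succ_le ht)]
end

section
/- Let ε > 0 and δ > 0 satisfy: for all x, y : Fin d → ℝ, if ‖x − y‖₁ < δ then |W(x) − W(y)| < ε. Then for every state s ∈ S, every t with 0 ≤ t ≤ T, and all v₁, v₂ : Fin d → ℝ with ‖v₁ − v₂‖₁ < δ, we have |V*(s, v₁, t) − V*(s, v₂, t)| ≤ ε. -/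
/-- The L1 norm on `Fin d → ℝ`: `‖x‖₁ = ∑ i, |x i|`. -/
noncomputable def l1norm {d : ℕ} (x : Fin d → ℝ) : ℝ := ∑ i, |x i|

lemma sup'_abs_sub {A : Type} [Fintype A] [Nonempty A] (f g : A → ℝ) (ε : ℝ)
    (h : ∀ a, |f a - g a| ≤ ε) :
    |Finset.univ.sup' Finset.univ_nonempty f - Finset.univ.sup' Finset.univ_nonempty g| ≤ ε := by
  rw [abs_sub_le_iff]
  constructor
  · rw [sub_le_iff_le_add]
    apply Finset.sup'_le
    intro a _
    have := abs_sub_le_iff.mp (h a)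
    have hg : g a ≤ Finset.univ.sup' Finset.univ_nonempty g :=
      Finset.le_sup' g (Finset.mem_univ a)
    linarith [this.1]
  · rw [sub_le_iff_le_add]
    apply Finset.sup'_le
    intro a _
    have := abs_sub_le_iff.mp (h a)
    have hf : f a ≤ Finset.univ.sup' Finset.univ_nonempty f :=
      Finset.le_sup' f (Finset.mem_univ a)
    linarith [this.2]

/-- uniform continuity of the multi-objective optimal value function.
If `|W x − W y| < ε` whenever `‖x − y‖₁ < δ`, then for every state `s`, every `t ≤ T`,
and all `v₁, v₂` with `‖v₁ − v₂‖₁ < δ`, we have `|V*(s, v₁, t) − V*(s, v₂, t)| ≤ ε`. -/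
theorem Vstar_uniform_continuity {S A : Type} [Fintype S] [Fintype A]
    [Nonempty S] [Nonempty A] {d : ℕ} (hd : 1 ≤ d)
    (P : S → A → S → ℝ) (hP0 : ∀ s a s', 0 ≤ P s a s') (hP1 : ∀ s a, ∑ s', P s a s' = 1)
    (R : S → A → Fin d → ℝ) (hR0 : ∀ s a i, 0 ≤ R s a i) (hR1 : ∀ s a i, R s a i ≤ 1)
    (γ : ℝ) (hγ0 : 0 ≤ γ) (hγ1 : γ < 1) (T : ℕ) (W : (Fin d → ℝ) → ℝ)
    (ε δ : ℝ) (hε : 0 < ε) (hδ : 0 < δ)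
    (hW : ∀ x y : Fin d → ℝ, l1norm (x - y) < δ → |W x - W y| < ε)
    (s : S) (t : ℕ) (ht : t ≤ T) (v₁ v₂ : Fin d → ℝ) (hv : l1norm (v₁ - v₂) < δ) :
    |Vstar P R γ T W t s v₁ - Vstar P R γ T W t s v₂| ≤ ε := by
  induction t generalizing s v₁ v₂ with
  | zero => exact le_of_lt (hW v₁ v₂ hv)
  | succ t ih =>
    simp only [Vstar]
    apply sup'_abs_sub
    intro a
    rw [← Finset.sum_sub_distrib]
    calc |∑ s', (P s a s' * Vstar P R γ T W t s' (v₁ + γ ^ (T - (t + 1)) • R s a) -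
            P s a s' * Vstar P R γ T W t s' (v₂ + γ ^ (T - (t + 1)) • R s a))|
        ≤ ∑ s', |P s a s' * Vstar P R γ T W t s' (v₁ + γ ^ (T - (t + 1)) • R s a) -
            P s a s' * Vstar P R γ T W t s' (v₂ + γ ^ (T - (t + 1)) • R s a)| :=
          Finset.abs_sum_le_sum_abs _ _
      _ ≤ ∑ s' : S, P s a s' * ε := by
          apply Finset.sum_le_sum
          intro s' _
          rw [← mul_sub, abs_mul, abs_of_nonneg (hP0 s a s')]
          apply mul_le_mul_of_nonneg_left _ (hP0 s a s')
          apply ih s' (le_of_lt (Nat.lt_of_succ_le ht))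
          have : (v₁ + γ ^ (T - (t + 1)) • R s a) - (v₂ + γ ^ (T - (t + 1)) • R s a)
              = v₁ - v₂ := by ring
          rwa [this]
      _ = ε := by rw [← Finset.sum_mul, hP1, one_mul]
end

section
/- Let T ≥ 1, ε > 0, and δ > 0 satisfy: for all x, y : Fin d → ℝ, if ‖x − y‖₁ ≤ δ then |W(x) − W(y)| ≤ ε/2. Set α = δ/(T·d). Then for every greedy RAVI policy σ_α and every state s ∈ S, the executed value satisfies U(s, 0, 0, T) ≥ V*(s, 0, T) − ε, where 0 denotes the zero vector in Fin d → ℝ. -/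
/-- The discretization map `f_α(x) i = ⌊x i / α⌋·α`. -/
noncomputable def falpha {d : ℕ} (α : ℝ) (x : Fin d → ℝ) : Fin d → ℝ :=
  fun i => (⌊x i / α⌋ : ℝ) * α

/-- The RAVI value function `V_α`, defined like `V*` but with the accumulated reward
discretized by `f_α` at each step. -/
noncomputable def Vravi {S A : Type} [Fintype S] [Fintype A] [Nonempty A] {d : ℕ}
    (P : S → A → S → ℝ) (R : S → A → Fin d → ℝ) (γ : ℝ) (T : ℕ)
    (W : (Fin d → ℝ) → ℝ) (α : ℝ) : ℕ → S → (Fin d → ℝ) → ℝ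
  | 0, _, v => W v
  | t + 1, s, v => Finset.univ.sup' Finset.univ_nonempty fun a : A =>
      ∑ s' : S, P s a s' *
        Vravi P R γ T W α t s' (falpha α (v + γ ^ (T - (t + 1)) • R s a))

/-- The executed value `U` of a greedy RAVI policy `σ`, tracking both the true
accumulated reward `v` and its discretized surrogate `w`:  `U(s, v, w, 0) = W v` and,
for `t ≥ 1`, with `a = σ s w t`,
`U(s, v, w, t) = ∑_{s'} P s a s' · U(s', v + γ^{T−t} • R s a, f_α(w + γ^{T−t} • R s a), t−1)`. -/
noncomputable def Uexec {S A : Type} [Fintype S] [Fintype A] {d : ℕ}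
    (P : S → A → S → ℝ) (R : S → A → Fin d → ℝ) (γ : ℝ) (T : ℕ)
    (W : (Fin d → ℝ) → ℝ) (α : ℝ) (σ : S → (Fin d → ℝ) → ℕ → A) :
    ℕ → S → (Fin d → ℝ) → (Fin d → ℝ) → ℝ
  | 0, _, v, _ => W v
  | t + 1, s, v, w => ∑ s' : S, P s (σ s w (t + 1)) s' *
      Uexec P R γ T W α σ t s'
        (v + γ ^ (T - (t + 1)) • R s (σ s w (t + 1)))
        (falpha α (w + γ ^ (T - (t + 1)) • R s (σ s w (t + 1))))

open Finset

lemma abs_sub_falpha_le {d : ℕ} {α : ℝ} (hα : 0 < α) (x : Fin d → ℝ) (i : Fin d) :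
    |x i - falpha α x i| ≤ α := by
  have hfract : x i - falpha α x i = α * Int.fract (x i / α) := by
    simp only [falpha, Int.fract]
    field_simp
  rw [hfract, abs_mul, abs_of_pos hα, abs_of_nonneg (Int.fract_nonneg _)]
  exact mul_le_of_le_one_right hα.le (Int.fract_lt_one _).le

lemma l1norm_sub_falpha_le {d : ℕ} {α : ℝ} (hα : 0 < α) (v w : Fin d → ℝ) :
    l1norm (v - falpha α w) ≤ l1norm (v - w) + d * α := by
  unfold l1norm
  calc ∑ i, |(v - falpha α w) i| ≤ ∑ i, (|(v - w) i| + α) := by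
        refine sum_le_sum fun i _ => ?_
        have := abs_sub_falpha_le hα w i
        simp only [Pi.sub_apply]
        linarith [abs_sub_le (v i) (w i) (falpha α w i)]
    _ = ∑ i, |(v - w) i| + d * α := by simp [sum_add_distrib]

lemma l1norm_add_sub_falpha_add_le {d : ℕ} {α : ℝ} (hα : 0 < α) (v w r : Fin d → ℝ) :
    l1norm (v + r - falpha α (w + r)) ≤ l1norm (v - w) + d * α := by
  simpa using l1norm_sub_falpha_le hα (v + r) (w + r)

lemma abs_sup'_sub_sup'_le {ι : Type*} {s : Finset ι} (hs : s.Nonempty) {f g : ι → ℝ} {c : ℝ}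
    (h : ∀ i ∈ s, |f i - g i| ≤ c) : |s.sup' hs f - s.sup' hs g| ≤ c := by
  rw [abs_sub_le_iff, sub_le_iff_le_add, sub_le_iff_le_add]
  constructor <;> refine sup'_le hs _ fun i hi => ?_
  · linarith [le_sup' g hi, (abs_sub_le_iff.mp (h i hi)).1]
  · linarith [le_sup' f hi, (abs_sub_le_iff.mp (h i hi)).2]

lemma abs_sum_mul_sub_sum_mul_le {ι : Type*} {s : Finset ι} {p f g : ι → ℝ} {c : ℝ}
    (hp0 : ∀ i ∈ s, 0 ≤ p i) (hp1 : ∑ i ∈ s, p i = 1) (h : ∀ i ∈ s, |f i - g i| ≤ c) :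
    |∑ i ∈ s, p i * f i - ∑ i ∈ s, p i * g i| ≤ c :=
  calc |∑ i ∈ s, p i * f i - ∑ i ∈ s, p i * g i| = |∑ i ∈ s, p i * (f i - g i)| := by
        simp only [mul_sub, sum_sub_distrib]
    _ ≤ ∑ i ∈ s, |p i * (f i - g i)| := abs_sum_le_sum_abs _ _
    _ ≤ ∑ i ∈ s, p i * c := sum_le_sum fun i hi => by
        rw [abs_mul, abs_of_nonneg (hp0 i hi)]
        exact mul_le_mul_of_nonneg_left (h i hi) (hp0 i hi)
    _ = c := by rw [← sum_mul, hp1, one_mul]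

section Lipschitz

variable {S A : Type} [Fintype S] [Fintype A] {d : ℕ}
  {P : S → A → S → ℝ} (hP0 : ∀ s a s', 0 ≤ P s a s') (hP1 : ∀ s a, ∑ s', P s a s' = 1)
  {R : S → A → Fin d → ℝ} {γ : ℝ} {T : ℕ} {W : (Fin d → ℝ) → ℝ} {α δ C : ℝ}
  (hα : 0 < α) (hW : ∀ x y : Fin d → ℝ, l1norm (x - y) ≤ δ → |W x - W y| ≤ C)
include hP0 hP1 hα hW

lemma abs_vstar_sub_vravi_le [Nonempty A] (t : ℕ) (s : S) {v w : Fin d → ℝ}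
    (hvw : l1norm (v - w) + t * (d * α) ≤ δ) :
    |Vstar P R γ T W t s v - Vravi P R γ T W α t s w| ≤ C := by
  induction t generalizing s v w with
  | zero => simpa [Vstar, Vravi] using hW v w (by simpa using hvw)
  | succ t ih =>
    refine abs_sup'_sub_sup'_le _ fun a _ =>
      abs_sum_mul_sub_sum_mul_le (fun s' _ => hP0 s a s') (hP1 s a) fun s' _ => ih s' ?_
    have := l1norm_add_sub_falpha_add_le hα v w (γ ^ (T - (t + 1)) • R s a)
    push_cast at hvw
    linarith

lemma abs_uexec_sub_vravi_le [Nonempty A] {σ : S → (Fin d → ℝ) → ℕ → A}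
    (hσ : ∀ (s : S) (v : Fin d → ℝ) (t : ℕ), 1 ≤ t → t ≤ T →
      ∑ s' : S, P s (σ s v t) s' *
          Vravi P R γ T W α (t - 1) s' (falpha α (v + γ ^ (T - t) • R s (σ s v t)))
        = Vravi P R γ T W α t s v)
    {t : ℕ} (ht : t ≤ T) (s : S) {v w : Fin d → ℝ}
    (hvw : l1norm (v - w) + t * (d * α) ≤ δ) :
    |Uexec P R γ T W α σ t s v w - Vravi P R γ T W α t s w| ≤ C := by
  induction t generalizing s v w with
  | zero => simpa [Uexec, Vravi] using hW v w (by simpa using hvw)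
  | succ t ih =>
    rw [Uexec, ← hσ s w (t + 1) (Nat.le_add_left 1 t) ht, Nat.add_sub_cancel]
    refine abs_sum_mul_sub_sum_mul_le (fun s' _ => hP0 s _ s') (hP1 s _)
      fun s' _ => ih (by omega) s' ?_
    have := l1norm_add_sub_falpha_add_le hα v w
      (γ ^ (T - (t + 1)) • R s (σ s w (t + 1)))
    push_cast at hvw
    linarith

end Lipschitz

theorem ravi_optimality_general {S A : Type} [Fintype S] [Fintype A] [Nonempty A]
    {d : ℕ} (hd : 1 ≤ d)
    (P : S → A → S → ℝ) (hP0 : ∀ s a s', 0 ≤ P s a s') (hP1 : ∀ s a, ∑ s', P s a s' = 1)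
    (R : S → A → Fin d → ℝ)
    (γ : ℝ) (T : ℕ) (hT : 1 ≤ T) (W : (Fin d → ℝ) → ℝ)
    (ε δ : ℝ) (hδ : 0 < δ)
    (hW : ∀ x y : Fin d → ℝ, l1norm (x - y) ≤ δ → |W x - W y| ≤ ε / 2)
    (α : ℝ) (hα : α = δ / (T * d))
    (σ : S → (Fin d → ℝ) → ℕ → A)
    (hσ : ∀ (s : S) (v : Fin d → ℝ) (t : ℕ), 1 ≤ t → t ≤ T →
      ∑ s' : S, P s (σ s v t) s' *
          Vravi P R γ T W α (t - 1) s' (falpha α (v + γ ^ (T - t) • R s (σ s v t)))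
        = Vravi P R γ T W α t s v)
    (s : S) :
    Uexec P R γ T W α σ T s 0 0 ≥ Vstar P R γ T W T s 0 - ε := by
  have hd' : (0 : ℝ) < d := by exact_mod_cast hd
  have hT' : (0 : ℝ) < T := by exact_mod_cast hT
  have hα_pos : 0 < α := by rw [hα]; positivity
  have h_start : l1norm ((0 : Fin d → ℝ) - 0) + T * (d * α) ≤ δ := by
    rw [hα]; field_simp; simp [l1norm]
  have h_opt := abs_vstar_sub_vravi_le (R := R) (γ := γ) (T := T) hP0 hP1 hα_pos hW T s h_start
  have h_exec := abs_uexec_sub_vravi_le hP0 hP1 hα_pos hW hσ le_rfl s h_start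
  linarith [abs_sub_le_iff.mp h_opt, abs_sub_le_iff.mp h_exec]

/-- optimality guarantee of RAVI.  Let `T ≥ 1`, `ε > 0`, `δ > 0`
satisfy `|W x − W y| ≤ ε/2` whenever `‖x − y‖₁ ≤ δ`, and set `α = δ/(T·d)`.  Then for
every greedy RAVI policy `σ_α` and every state `s`, the executed value satisfies
`U(s, 0, 0, T) ≥ V*(s, 0, T) − ε`. -/
theorem ravi_optimality {S A : Type} [Fintype S] [Fintype A] [Nonempty S] [Nonempty A]
    {d : ℕ} (hd : 1 ≤ d)
    (P : S → A → S → ℝ) (hP0 : ∀ s a s', 0 ≤ P s a s') (hP1 : ∀ s a, ∑ s', P s a s' = 1)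
    (R : S → A → Fin d → ℝ) (hR0 : ∀ s a i, 0 ≤ R s a i) (hR1 : ∀ s a i, R s a i ≤ 1)
    (γ : ℝ) (hγ0 : 0 ≤ γ) (hγ1 : γ < 1) (T : ℕ) (hT : 1 ≤ T) (W : (Fin d → ℝ) → ℝ)
    (ε δ : ℝ) (hε : 0 < ε) (hδ : 0 < δ)
    (hW : ∀ x y : Fin d → ℝ, l1norm (x - y) ≤ δ → |W x - W y| ≤ ε / 2)
    (α : ℝ) (hα : α = δ / (T * d))
    (σ : S → (Fin d → ℝ) → ℕ → A)
    (hσ : ∀ (s : S) (v : Fin d → ℝ) (t : ℕ), 1 ≤ t → t ≤ T →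
      ∑ s' : S, P s (σ s v t) s' *
          Vravi P R γ T W α (t - 1) s' (falpha α (v + γ ^ (T - t) • R s (σ s v t)))
        = Vravi P R γ T W α t s v)
    (s : S) :
    Uexec P R γ T W α σ T s 0 0 ≥ Vstar P R γ T W T s 0 - ε :=
  ravi_optimality_general hd P hP0 hP1 R γ T hT W ε δ hδ hW α hα σ hσ s
end

section
/- Let P and P' be two transition functions on the same state and action types S, A (each satisfying P s a s' ≥ 0, P' s a s' ≥ 0, ∑_{s'} P s a s' = 1, and ∑_{s'} P' s a s' = 1 for all s, a), and suppose |P s a s' − P' s a s'| ≤ α for all s, a, s', where 0 < α < 1. Let π be a history-dependent policy, s ∈ S a start state, T ≥ 1, ε > 0, and G > 0, and suppose 0 ≤ W(R(τ)) ≤ G for every length-T trajectory τ starting at s. Assume further that 3·√α·|S|·|A|·T·G ≤ ε/4, (1 + √α)^T ≤ 1 + ε/(4G), and (1 − √α)^T ≥ 1 − ε/(4G). Then |∑_τ Pr^π_P[τ]·W(R(τ)) − ∑_τ Pr^π_{P'}[τ]·W(R(τ))| ≤ ε, where both sums range over all length-T trajectories τ starting at s and Pr^π_P, Pr^π_{P'}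 denote the trajectory probabilities under the transition functions P and P' respectively. -/
/-- The probability `Pr^π_P[τ]` of a trajectory `τ` (a list of state-action pairs),
executed after history `h` with `t` steps remaining at the start of `τ`, under
history-dependent policy `pol` and transition function `P`. -/
noncomputable def PrTraj {S A : Type}
    (P : S → A → S → ℝ) (pol : List (S × A) → S → ℕ → A → ℝ) :
    List (S × A) → ℕ → List (S × A) → ℝ
  | _, _, [] => 1
  | h, t, (s, a) :: rest =>
      pol h s t a *
      (match rest with
       | [] => 1
       | (s', _) :: _ => P s a s') *
      PrTraj P pol (h ++ [(s, a)]) (t - 1) rest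

/-- The discounted reward vector `R(τ) = ∑_{k=1}^{T} γ^{k−1} • R s_k a_k` of a
length-`T` trajectory. -/
noncomputable def Rtraj {S A : Type} {d : ℕ} (R : S → A → Fin d → ℝ) (γ : ℝ)
    {T : ℕ} (τ : Fin T → S × A) : Fin d → ℝ :=
  ∑ k : Fin T, γ ^ (k : ℕ) • R (τ k).1 (τ k).2

/-- Suffix probability given the previous state-action pair. -/
noncomputable def Qaux {S A : Type} (P : S → A → S → ℝ)
    (pol : List (S × A) → S → ℕ → A → ℝ) :
    List (S × A) → ℕ → S × A → List (S × A) → ℝ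
  | _, _, _, [] => 1
  | h, t, prev, (s, a) :: rest =>
      P prev.1 prev.2 s * pol h s t a * Qaux P pol (h ++ [(s, a)]) (t - 1) (s, a) rest

lemma PrTraj_eq_Qaux {S A : Type} (P : S → A → S → ℝ)
    (pol : List (S × A) → S → ℕ → A → ℝ) :
    ∀ (l h : List (S × A)) (t : ℕ) (s : S) (a : A),
      PrTraj P pol h t ((s, a) :: l) =
        pol h s t a * Qaux P pol (h ++ [(s, a)]) (t - 1) (s, a) l := by
  intro l
  induction l with
  | nil => intro h t s a; simp [PrTraj, Qaux]
  | cons x rest ih =>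
      intro h t s a
      obtain ⟨s', a'⟩ := x
      have e1 : PrTraj P pol h t ((s, a) :: (s', a') :: rest) =
          pol h s t a * P s a s' * PrTraj P pol (h ++ [(s, a)]) (t - 1) ((s', a') :: rest) :=
        rfl
      rw [e1, ih, Qaux]
      ring

lemma sum_pi_succ {β : Type} [Fintype β] (n : ℕ) (f : (Fin (n + 1) → β) → ℝ) :
    ∑ τ : Fin (n + 1) → β, f τ = ∑ x : β, ∑ rest : Fin n → β, f (Fin.cons x rest) := by
  rw [← (Fin.consEquiv (fun _ => β)).sum_comp, Fintype.sum_prod_type]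
  rfl

lemma ofFn_cons {S A : Type} (x : S × A) {n : ℕ} (rest : Fin n → S × A) :
    List.ofFn (Fin.cons (α := fun _ => S × A) x rest) = x :: List.ofFn rest := by
  rw [List.ofFn_succ]
  simp

section lemmas

set_option linter.unusedSectionVars false

variable {S A : Type} [Fintype S] [Fintype A]
  (P P' : S → A → S → ℝ) (pol : List (S × A) → S → ℕ → A → ℝ)
  (hP0 : ∀ s a s', 0 ≤ P s a s') (hP1 : ∀ s a, ∑ s', P s a s' = 1)
  (hP'0 : ∀ s a s', 0 ≤ P' s a s') (hP'1 : ∀ s a, ∑ s', P' s a s' = 1)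
  (hpol0 : ∀ h s t a, 0 ≤ pol h s t a)
  (hpol1 : ∀ h s t, ∑ a, pol h s t a = 1)

include hP0 hpol0 in
lemma Qaux_nonneg : ∀ (l h : List (S × A)) (t : ℕ) (prev : S × A),
    0 ≤ Qaux P pol h t prev l := by
  intro l
  induction l with
  | nil => intro h t prev; simp [Qaux]
  | cons x rest ih =>
      intro h t prev
      obtain ⟨s, a⟩ := x
      simp only [Qaux]
      exact mul_nonneg (mul_nonneg (hP0 _ _ _) (hpol0 _ _ _ _)) (ih _ _ _)

include hP0 hP1 hpol0 hpol1 in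
lemma Qaux_mass : ∀ (n : ℕ) (h : List (S × A)) (t : ℕ) (prev : S × A),
    ∑ τ : Fin n → S × A, Qaux P pol h t prev (List.ofFn τ) = 1 := by
  intro n
  induction n with
  | zero => intro h t prev; simp [Qaux]
  | succ n ih =>
      intro h t prev
      rw [sum_pi_succ]
      have key : ∀ x : S × A, ∑ rest : Fin n → S × A,
          Qaux P pol h t prev (List.ofFn (Fin.cons x rest)) =
          P prev.1 prev.2 x.1 * pol h x.1 t x.2 := by
        intro x
        simp only [ofFn_cons, Qaux]
        rw [← Finset.mul_sum, ih, mul_one]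
      calc ∑ x : S × A, ∑ rest : Fin n → S × A,
            Qaux P pol h t prev (List.ofFn (Fin.cons x rest))
          = ∑ x : S × A, P prev.1 prev.2 x.1 * pol h x.1 t x.2 :=
            Finset.sum_congr rfl fun x _ => key x
        _ = ∑ s' : S, P prev.1 prev.2 s' * ∑ a : A, pol h s' t a := by
            rw [Fintype.sum_prod_type]
            refine Finset.sum_congr rfl fun s' _ => ?_
            dsimp only
            rw [Finset.mul_sum]
        _ = 1 := by simp only [hpol1, mul_one]; exact hP1 _ _

include hP0 hP1 hP'0 hP'1 hpol0 hpol1 in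
lemma Qaux_diff (α : ℝ) (hα0 : 0 ≤ α) (hPP' : ∀ s a s', |P s a s' - P' s a s'| ≤ α) :
    ∀ (n : ℕ) (h : List (S × A)) (t : ℕ) (prev : S × A),
      ∑ τ : Fin n → S × A,
          |Qaux P pol h t prev (List.ofFn τ) - Qaux P' pol h t prev (List.ofFn τ)|
        ≤ n * (Fintype.card S) * α := by
  intro n
  induction n with
  | zero => intro h t prev; simp [Qaux]
  | succ n ih =>
      intro h t prev
      rw [sum_pi_succ]
      set C : ℝ := n * (Fintype.card S) * α with hC
      have hC0 : 0 ≤ C := by positivity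
      have key : ∀ x : S × A, ∑ rest : Fin n → S × A,
          |Qaux P pol h t prev (List.ofFn (Fin.cons x rest)) -
            Qaux P' pol h t prev (List.ofFn (Fin.cons x rest))|
          ≤ pol h x.1 t x.2 * |P prev.1 prev.2 x.1 - P' prev.1 prev.2 x.1| +
            pol h x.1 t x.2 * P' prev.1 prev.2 x.1 * C := by
        intro x
        obtain ⟨s, a⟩ := x
        simp only [ofFn_cons, Qaux]
        have hpt : ∀ rest : Fin n → S × A,
            |P prev.1 prev.2 s * pol h s t a *
                Qaux P pol (h ++ [(s, a)]) (t - 1) (s, a) (List.ofFn rest) -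
              P' prev.1 prev.2 s * pol h s t a *
                Qaux P' pol (h ++ [(s, a)]) (t - 1) (s, a) (List.ofFn rest)|
            ≤ pol h s t a * |P prev.1 prev.2 s - P' prev.1 prev.2 s| *
                Qaux P pol (h ++ [(s, a)]) (t - 1) (s, a) (List.ofFn rest) +
              pol h s t a * P' prev.1 prev.2 s *
                |Qaux P pol (h ++ [(s, a)]) (t - 1) (s, a) (List.ofFn rest) -
                  Qaux P' pol (h ++ [(s, a)]) (t - 1) (s, a) (List.ofFn rest)| := by
          intro rest
          set u := Qaux P pol (h ++ [(s, a)]) (t - 1) (s, a) (List.ofFn rest) with hu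
          set v := Qaux P' pol (h ++ [(s, a)]) (t - 1) (s, a) (List.ofFn rest) with hv
          have hu0 : 0 ≤ u := Qaux_nonneg P pol hP0 hpol0 _ _ _ _
          have e : P prev.1 prev.2 s * pol h s t a * u - P' prev.1 prev.2 s * pol h s t a * v
              = pol h s t a * ((P prev.1 prev.2 s - P' prev.1 prev.2 s) * u +
                  P' prev.1 prev.2 s * (u - v)) := by ring
          rw [e, abs_mul, abs_of_nonneg (hpol0 _ _ _ _)]
          have habs : |(P prev.1 prev.2 s - P' prev.1 prev.2 s) * u +
              P' prev.1 prev.2 s * (u - v)|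
              ≤ |P prev.1 prev.2 s - P' prev.1 prev.2 s| * u +
                P' prev.1 prev.2 s * |u - v| := by
            calc |(P prev.1 prev.2 s - P' prev.1 prev.2 s) * u +
                P' prev.1 prev.2 s * (u - v)|
                ≤ |(P prev.1 prev.2 s - P' prev.1 prev.2 s) * u| +
                  |P' prev.1 prev.2 s * (u - v)| := abs_add_le _ _
              _ = |P prev.1 prev.2 s - P' prev.1 prev.2 s| * u +
                  P' prev.1 prev.2 s * |u - v| := by
                  rw [abs_mul, abs_mul, abs_of_nonneg hu0, abs_of_nonneg (hP'0 _ _ _)]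
          calc pol h s t a * |(P prev.1 prev.2 s - P' prev.1 prev.2 s) * u +
              P' prev.1 prev.2 s * (u - v)|
              ≤ pol h s t a * (|P prev.1 prev.2 s - P' prev.1 prev.2 s| * u +
                P' prev.1 prev.2 s * |u - v|) :=
                mul_le_mul_of_nonneg_left habs (hpol0 _ _ _ _)
            _ = pol h s t a * |P prev.1 prev.2 s - P' prev.1 prev.2 s| * u +
                pol h s t a * P' prev.1 prev.2 s * |u - v| := by ring
        calc ∑ rest : Fin n → S × A,
            |P prev.1 prev.2 s * pol h s t a *
                Qaux P pol (h ++ [(s, a)]) (t - 1) (s, a) (List.ofFn rest) -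
              P' prev.1 prev.2 s * pol h s t a *
                Qaux P' pol (h ++ [(s, a)]) (t - 1) (s, a) (List.ofFn rest)|
            ≤ ∑ rest : Fin n → S × A,
              (pol h s t a * |P prev.1 prev.2 s - P' prev.1 prev.2 s| *
                Qaux P pol (h ++ [(s, a)]) (t - 1) (s, a) (List.ofFn rest) +
              pol h s t a * P' prev.1 prev.2 s *
                |Qaux P pol (h ++ [(s, a)]) (t - 1) (s, a) (List.ofFn rest) -
                  Qaux P' pol (h ++ [(s, a)]) (t - 1) (s, a) (List.ofFn rest)|) :=
              Finset.sum_le_sum fun rest _ => hpt rest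
          _ = pol h s t a * |P prev.1 prev.2 s - P' prev.1 prev.2 s| *
                (∑ rest : Fin n → S × A,
                  Qaux P pol (h ++ [(s, a)]) (t - 1) (s, a) (List.ofFn rest)) +
              pol h s t a * P' prev.1 prev.2 s *
                (∑ rest : Fin n → S × A,
                  |Qaux P pol (h ++ [(s, a)]) (t - 1) (s, a) (List.ofFn rest) -
                    Qaux P' pol (h ++ [(s, a)]) (t - 1) (s, a) (List.ofFn rest)|) := by
              rw [Finset.sum_add_distrib, ← Finset.mul_sum, ← Finset.mul_sum]
          _ ≤ pol h s t a * |P prev.1 prev.2 s - P' prev.1 prev.2 s| * 1 +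
              pol h s t a * P' prev.1 prev.2 s * C := by
              gcongr
              · exact mul_nonneg (hpol0 _ _ _ _) (abs_nonneg _)
              · exact le_of_eq (Qaux_mass P pol hP0 hP1 hpol0 hpol1 n _ _ _)
              · exact mul_nonneg (hpol0 _ _ _ _) (hP'0 _ _ _)
              · exact ih _ _ _
          _ = pol h s t a * |P prev.1 prev.2 s - P' prev.1 prev.2 s| +
              pol h s t a * P' prev.1 prev.2 s * C := by ring
      calc ∑ x : S × A, ∑ rest : Fin n → S × A,
            |Qaux P pol h t prev (List.ofFn (Fin.cons x rest)) -
              Qaux P' pol h t prev (List.ofFn (Fin.cons x rest))|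
          ≤ ∑ x : S × A,
              (pol h x.1 t x.2 * |P prev.1 prev.2 x.1 - P' prev.1 prev.2 x.1| +
                pol h x.1 t x.2 * P' prev.1 prev.2 x.1 * C) :=
            Finset.sum_le_sum fun x _ => key x
        _ = ∑ s' : S, (|P prev.1 prev.2 s' - P' prev.1 prev.2 s'| +
              P' prev.1 prev.2 s' * C) := by
            rw [Fintype.sum_prod_type]
            refine Finset.sum_congr rfl fun s' _ => ?_
            dsimp only
            rw [Finset.sum_add_distrib]
            congr 1
            · rw [← Finset.sum_mul, hpol1]; ring
            · have : ∀ a : A, pol h s' t a * P' prev.1 prev.2 s' * C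
                  = pol h s' t a * (P' prev.1 prev.2 s' * C) := fun a => by ring
              simp only [this]
              rw [← Finset.sum_mul, hpol1]; ring
        _ ≤ (Fintype.card S) * α + 1 * C := by
            rw [Finset.sum_add_distrib]
            gcongr
            · calc ∑ s' : S, |P prev.1 prev.2 s' - P' prev.1 prev.2 s'|
                  ≤ ∑ _s' : S, α := Finset.sum_le_sum fun s' _ => hPP' _ _ _
                _ = (Fintype.card S) * α := by
                    rw [Finset.sum_const, nsmul_eq_mul]; simp
            · rw [← Finset.sum_mul, hP'1]
        _ = (↑(n + 1)) * (Fintype.card S) * α := by push_cast; ring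

end lemmas

/-- Extended Simulation Lemma, explicit parameters `β = Δ = √α`.
If `P` and `P'` are transition functions with `|P s a s' − P' s a s'| ≤ α` for all
`s, a, s'` (`0 < α < 1`), welfare along every length-`T` trajectory from `s` lies in
`[0, G]`, and `3√α·|S|·|A|·T·G ≤ ε/4`, `(1+√α)^T ≤ 1 + ε/(4G)`,
`(1−√α)^T ≥ 1 − ε/(4G)`, then the expected `T`-step welfare of any policy under `P`
and under `P'` differ by at most `ε`. -/
theorem extended_simulation_lemma {S A : Type} [Fintype S] [Fintype A]
    [Nonempty S] [Nonempty A] [DecidableEq S] {d : ℕ} (hd : 1 ≤ d)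
    (P P' : S → A → S → ℝ)
    (hP0 : ∀ s a s', 0 ≤ P s a s') (hP1 : ∀ s a, ∑ s', P s a s' = 1)
    (hP'0 : ∀ s a s', 0 ≤ P' s a s') (hP'1 : ∀ s a, ∑ s', P' s a s' = 1)
    (α : ℝ) (hα0 : 0 < α) (hα1 : α < 1)
    (hPP' : ∀ s a s', |P s a s' - P' s a s'| ≤ α)
    (R : S → A → Fin d → ℝ) (hR0 : ∀ s a i, 0 ≤ R s a i) (hR1 : ∀ s a i, R s a i ≤ 1)
    (γ : ℝ) (hγ0 : 0 ≤ γ) (hγ1 : γ < 1) (W : (Fin d → ℝ) → ℝ)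
    (pol : List (S × A) → S → ℕ → A → ℝ)
    (hpol0 : ∀ h s t a, 0 ≤ pol h s t a)
    (hpol1 : ∀ h s t, ∑ a, pol h s t a = 1)
    (s : S) (T : ℕ) (hT : 1 ≤ T) (ε G : ℝ) (hε : 0 < ε) (hG : 0 < G)
    (hWbd : ∀ τ : Fin T → S × A, (τ ⟨0, hT⟩).1 = s →
      0 ≤ W (Rtraj R γ τ) ∧ W (Rtraj R γ τ) ≤ G)
    (h1 : 3 * Real.sqrt α * (Fintype.card S) * (Fintype.card A) * T * G ≤ ε / 4)
    (h2 : (1 + Real.sqrt α) ^ T ≤ 1 + ε / (4 * G))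
    (h3 : (1 - Real.sqrt α) ^ T ≥ 1 - ε / (4 * G)) :
    |(∑ τ : Fin T → S × A,
        (if (τ ⟨0, hT⟩).1 = s then PrTraj P pol [] T (List.ofFn τ) * W (Rtraj R γ τ) else 0)) -
     (∑ τ : Fin T → S × A,
        (if (τ ⟨0, hT⟩).1 = s then PrTraj P' pol [] T (List.ofFn τ) * W (Rtraj R γ τ) else 0))|
      ≤ ε := by
  obtain ⟨m, rfl⟩ : ∃ m, T = m + 1 := ⟨T - 1, (Nat.succ_pred_eq_of_pos hT).symm⟩
  -- Step 1: bound by G times total variation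
  rw [← Finset.sum_sub_distrib]
  have combine : ∀ τ : Fin (m + 1) → S × A,
      (if (τ ⟨0, hT⟩).1 = s then PrTraj P pol [] (m + 1) (List.ofFn τ) * W (Rtraj R γ τ) else 0) -
      (if (τ ⟨0, hT⟩).1 = s then PrTraj P' pol [] (m + 1) (List.ofFn τ) * W (Rtraj R γ τ) else 0)
      = if (τ ⟨0, hT⟩).1 = s then
          (PrTraj P pol [] (m + 1) (List.ofFn τ) - PrTraj P' pol [] (m + 1) (List.ofFn τ)) *
            W (Rtraj R γ τ)
        else 0 := by
    intro τ; split <;> ring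
  simp only [combine]
  have step1 : |∑ τ : Fin (m + 1) → S × A,
      (if (τ ⟨0, hT⟩).1 = s then
          (PrTraj P pol [] (m + 1) (List.ofFn τ) - PrTraj P' pol [] (m + 1) (List.ofFn τ)) *
            W (Rtraj R γ τ)
        else 0)|
      ≤ ∑ τ : Fin (m + 1) → S × A,
        (if (τ ⟨0, hT⟩).1 = s then
          |PrTraj P pol [] (m + 1) (List.ofFn τ) - PrTraj P' pol [] (m + 1) (List.ofFn τ)| * G
        else 0) := by
    refine (Finset.abs_sum_le_sum_abs _ _).trans (Finset.sum_le_sum fun τ _ => ?_)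
    by_cases hτ : (τ ⟨0, hT⟩).1 = s
    · rw [if_pos hτ, if_pos hτ, abs_mul]
      have hW : |W (Rtraj R γ τ)| ≤ G := by
        rw [abs_of_nonneg (hWbd τ hτ).1]; exact (hWbd τ hτ).2
      exact mul_le_mul_of_nonneg_left hW (abs_nonneg _)
    · rw [if_neg hτ, if_neg hτ, abs_zero]
  refine step1.trans ?_
  -- Step 2: total variation bound
  rw [sum_pi_succ]
  have hmk : (⟨0, hT⟩ : Fin (m + 1)) = 0 := rfl
  have key : ∀ x : S × A, ∑ rest : Fin m → S × A,
      (if ((Fin.cons x rest : Fin (m+1) → S × A) ⟨0, hT⟩).1 = s then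
        |PrTraj P pol [] (m + 1) (List.ofFn (Fin.cons x rest)) -
          PrTraj P' pol [] (m + 1) (List.ofFn (Fin.cons x rest))| * G
      else 0)
      ≤ if x.1 = s then pol [] x.1 (m + 1) x.2 * (m * (Fintype.card S) * α * G) else 0 := by
    intro x
    obtain ⟨s₀, a₀⟩ := x
    simp only [hmk, Fin.cons_zero]
    by_cases hx : s₀ = s
    · subst hx
      simp only [ofFn_cons, eq_self_iff_true, if_true]
      have e : ∀ rest : Fin m → S × A,
          |PrTraj P pol [] (m + 1) ((s₀, a₀) :: List.ofFn rest) -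
            PrTraj P' pol [] (m + 1) ((s₀, a₀) :: List.ofFn rest)| * G
          = pol [] s₀ (m + 1) a₀ *
            |Qaux P pol [(s₀, a₀)] m (s₀, a₀) (List.ofFn rest) -
              Qaux P' pol [(s₀, a₀)] m (s₀, a₀) (List.ofFn rest)| * G := by
        intro rest
        rw [PrTraj_eq_Qaux, PrTraj_eq_Qaux]
        simp only [List.nil_append, Nat.add_sub_cancel]
        rw [← mul_sub, abs_mul, abs_of_nonneg (hpol0 _ _ _ _)]
      simp only [e]
      have : ∑ rest : Fin m → S × A,
          pol [] s₀ (m + 1) a₀ *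
            |Qaux P pol [(s₀, a₀)] m (s₀, a₀) (List.ofFn rest) -
              Qaux P' pol [(s₀, a₀)] m (s₀, a₀) (List.ofFn rest)| * G
          = pol [] s₀ (m + 1) a₀ * G *
            ∑ rest : Fin m → S × A,
              |Qaux P pol [(s₀, a₀)] m (s₀, a₀) (List.ofFn rest) -
                Qaux P' pol [(s₀, a₀)] m (s₀, a₀) (List.ofFn rest)| := by
        rw [Finset.mul_sum]
        exact Finset.sum_congr rfl fun rest _ => by ring
      rw [this]
      have hdiff := Qaux_diff P P' pol hP0 hP1 hP'0 hP'1 hpol0 hpol1 α hα0.le hPP'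
        m [(s₀, a₀)] m (s₀, a₀)
      calc pol [] s₀ (m + 1) a₀ * G *
          ∑ rest : Fin m → S × A,
            |Qaux P pol [(s₀, a₀)] m (s₀, a₀) (List.ofFn rest) -
              Qaux P' pol [(s₀, a₀)] m (s₀, a₀) (List.ofFn rest)|
          ≤ pol [] s₀ (m + 1) a₀ * G * (m * (Fintype.card S) * α) := by
            gcongr
            exact mul_nonneg (hpol0 _ _ _ _) hG.le
        _ = pol [] s₀ (m + 1) a₀ * (m * (Fintype.card S) * α * G) := by ring
    · simp [hx]
  have step2 : ∑ x : S × A, ∑ rest : Fin m → S × A,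
      (if ((Fin.cons x rest : Fin (m+1) → S × A) ⟨0, hT⟩).1 = s then
        |PrTraj P pol [] (m + 1) (List.ofFn (Fin.cons x rest)) -
          PrTraj P' pol [] (m + 1) (List.ofFn (Fin.cons x rest))| * G
      else 0)
      ≤ m * (Fintype.card S) * α * G := by
    calc ∑ x : S × A, ∑ rest : Fin m → S × A,
        (if ((Fin.cons x rest : Fin (m+1) → S × A) ⟨0, hT⟩).1 = s then
          |PrTraj P pol [] (m + 1) (List.ofFn (Fin.cons x rest)) -
            PrTraj P' pol [] (m + 1) (List.ofFn (Fin.cons x rest))| * G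
        else 0)
        ≤ ∑ x : S × A,
            (if x.1 = s then pol [] x.1 (m + 1) x.2 * (m * (Fintype.card S) * α * G) else 0) :=
          Finset.sum_le_sum fun x _ => key x
      _ = ∑ s₀ : S, (if s₀ = s then m * (Fintype.card S) * α * G else 0) := by
          rw [Fintype.sum_prod_type]
          refine Finset.sum_congr rfl fun s₀ _ => ?_
          by_cases hx : s₀ = s
          · simp only [hx, if_pos]
            rw [← Finset.sum_mul, hpol1, one_mul]
          · simp [hx]
      _ = m * (Fintype.card S) * α * G := by
          rw [Finset.sum_ite_eq' Finset.univ s (fun _ => m * (Fintype.card S) * α * G)]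
          simp
  refine step2.trans ?_
  -- Step 3: arithmetic
  have hsq : α ≤ Real.sqrt α := by
    have h' : Real.sqrt (α * α) ≤ Real.sqrt α :=
      Real.sqrt_le_sqrt (by nlinarith)
    rwa [Real.sqrt_mul_self hα0.le] at h'
  have hcardS : (0 : ℝ) ≤ (Fintype.card S : ℝ) := Nat.cast_nonneg _
  have hcardA : (1 : ℝ) ≤ (Fintype.card A : ℝ) := by
    exact_mod_cast Nat.one_le_iff_ne_zero.mpr (Fintype.card_ne_zero)
  have hm : (m : ℝ) ≤ (m : ℝ) + 1 := by linarith
  have hchain : (m : ℝ) * (Fintype.card S) * α * G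
      ≤ 3 * Real.sqrt α * (Fintype.card S) * (Fintype.card A) * ((m : ℝ) + 1) * G := by
    have h0 : (0:ℝ) ≤ Real.sqrt α := Real.sqrt_nonneg α
    calc (m : ℝ) * (Fintype.card S) * α * G
        = 1 * α * (Fintype.card S) * 1 * (m : ℝ) * G := by ring
      _ ≤ 3 * Real.sqrt α * (Fintype.card S) * (Fintype.card A) * ((m : ℝ) + 1) * G := by
          gcongr <;> first | exact hα0.le | norm_num
  have h1' : 3 * Real.sqrt α * (Fintype.card S) * (Fintype.card A) * ((m : ℝ) + 1) * G
      ≤ ε / 4 := by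
    have := h1
    push_cast at this ⊢
    linarith
  linarith
end

section
/- Let M be an MOMDP with states S, actions A, transitions P, and rewards R, let K ⊆ S be a set of states, and let M_K be the induced MOMDP on K. Let s ∈ K, T ≥ 1, G > 0, and suppose 0 ≤ W(x) ≤ G for every x : Fin d → ℝ with 0 ≤ x i ≤ T for all i. Then for every α with 0 < α < 1, at least one of the following holds: (i) there exists a history-dependent policy π on M_K with V^π_{M_K}(s, 0, [], T) ≥ V*_M(s, 0, T) − α; or (ii) there exists a history-dependent policy π on M_K such that the probability that a length-T trajectory from s under π in M_K visits the absorbing exit state ⊥ exceeds α/G. -/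
/-- The transition function of the induced MOMDP `M_K` on the known states `K`,
with a single absorbing exit state `⊥ = Sum.inr ()` representing all unknown states. -/
noncomputable def PK {S A : Type} [Fintype S] [DecidableEq S]
    (P : S → A → S → ℝ) (K : Finset S) : (↥K ⊕ Unit) → A → (↥K ⊕ Unit) → ℝ
  | Sum.inl s, a, Sum.inl s' => P s.1 a s'.1
  | Sum.inl s, a, Sum.inr _ => ∑ s' ∈ Kᶜ, P s.1 a s'
  | Sum.inr _, _, Sum.inr _ => 1
  | Sum.inr _, _, Sum.inl _ => 0

/-- The reward function of the induced MOMDP `M_K`: it agrees with `R` on `K × A` and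
is the zero vector at the absorbing exit state. -/
def RK {S A : Type} {d : ℕ} (R : S → A → Fin d → ℝ) (K : Finset S) :
    (↥K ⊕ Unit) → A → Fin d → ℝ
  | Sum.inl s, a => R s.1 a
  | Sum.inr _, _ => fun _ => 0

/-!
Let `π` be the policy on `M_K` that, in a known state, plays an action that is greedy for `V*_M`
at the reward vector accumulated so far (which it recomputes from its history), and anything at
the exit state `⊥`. Backward induction on the number of remaining steps shows
`V*_M ≤ V^π_{M_K} + G · Pr^π[⊥ is reached]`: while the process stays in `K` the two models
coincide, and once `M` leaves `K` its optimal value is at most `G`, whereas `M_K` moves to `⊥`,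
where the value of `π` is still nonnegative. So `π` witnesses (i) if it reaches `⊥` with
probability at most `α / G`, and (ii) otherwise.
-/

namespace MOMDP

variable {X A : Type} {d : ℕ}

section DeterministicPolicy

variable [DecidableEq A] (σ : List (X × A) → X → ℕ → A)

def detPolicy : List (X × A) → X → ℕ → A → ℝ :=
  fun h x n a => if a = σ h x n then 1 else 0

lemma detPolicy_nonneg (h : List (X × A)) (x : X) (n : ℕ) (a : A) :
    0 ≤ detPolicy σ h x n a := by
  unfold detPolicy; split_ifs <;> norm_num

lemma sum_detPolicy_mul [Fintype A] (h : List (X × A)) (x : X) (n : ℕ) (f : A → ℝ) :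
    ∑ a, detPolicy σ h x n a * f a = f (σ h x n) := by
  simp [detPolicy]

lemma sum_detPolicy [Fintype A] (h : List (X × A)) (x : X) (n : ℕ) :
    ∑ a, detPolicy σ h x n a = 1 := by
  simpa using sum_detPolicy_mul σ h x n fun _ => 1

end DeterministicPolicy

section Trajectories

variable (P' : X → A → X → ℝ) (pol : List (X × A) → X → ℕ → A → ℝ)

open Classical in
noncomputable def eventProb [Fintype X] [Fintype A] (h : List (X × A)) (t : ℕ) (x : X)
    (E : (Fin (t + 1) → X × A) → Prop) : ℝ :=
  ∑ τ : Fin (t + 1) → X × A,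
    if (τ 0).1 = x ∧ E τ then PrTraj P' pol h (t + 1) (List.ofFn τ) else 0

lemma PrTraj_cons_ofFn (h : List (X × A)) (n : ℕ) (y : X × A) {t : ℕ} (τ : Fin (t + 1) → X × A) :
    PrTraj P' pol h n (y :: List.ofFn τ) =
      pol h y.1 n y.2 * P' y.1 y.2 (τ 0).1 * PrTraj P' pol (h ++ [y]) (n - 1) (List.ofFn τ) := by
  rw [List.ofFn_succ]; rfl

open Classical in
lemma eventProb_zero [Fintype X] [Fintype A] (h : List (X × A)) (x : X)
    (E : (Fin 1 → X × A) → Prop) :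
    eventProb P' pol h 0 x E = ∑ a, if E (fun _ => (x, a)) then pol h x 1 a else 0 := by
  classical
  unfold eventProb
  rw [← (Equiv.funUnique (Fin 1) (X × A)).symm.sum_comp, Fintype.sum_prod_type]
  simp [PrTraj, ite_and]
  rfl

lemma eventProb_succ [Fintype X] [Fintype A] (h : List (X × A)) (t : ℕ) (x : X)
    (E : (Fin (t + 2) → X × A) → Prop) :
    eventProb P' pol h (t + 1) x E = ∑ a, pol h x (t + 2) a * ∑ x', P' x a x' *
      eventProb P' pol (h ++ [(x, a)]) t x' (fun τ => E (Fin.cons (x, a) τ)) := by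
  classical
  unfold eventProb
  rw [← (Fin.consEquiv fun _ => X × A).sum_comp, Fintype.sum_prod_type, Fintype.sum_prod_type]
  simp only [Fin.consEquiv, Equiv.coe_fn_mk, Fin.cons_zero, List.ofFn_cons, PrTraj_cons_ofFn]
  simp only [ite_and, Finset.sum_ite_irrel, Finset.sum_const_zero, Fintype.sum_ite_eq']
  refine Finset.sum_congr rfl fun a _ => ?_
  simp only [Finset.mul_sum, mul_ite, mul_zero]
  rw [Finset.sum_comm]
  refine Finset.sum_congr rfl fun τ _ => ?_
  simp only [Fintype.sum_ite_eq]
  split_ifs <;> simp [mul_assoc]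

lemma eventProb_true [Fintype X] [Fintype A] (hP'1 : ∀ x a, ∑ x', P' x a x' = 1)
    (hpol1 : ∀ h x n, ∑ a, pol h x n a = 1) (t : ℕ) (h : List (X × A)) (x : X) :
    eventProb P' pol h t x (fun _ => True) = 1 := by
  induction t generalizing h x with
  | zero => simp [eventProb_zero, hpol1]
  | succ t ih => simp [eventProb_succ, ih, hP'1, hpol1]

/-- Only the `t` states at which an action is taken are tested against `B`, as in a
trajectory of length `t`. -/
noncomputable def reachProb [Fintype X] [Fintype A] (B : X → Prop) [DecidablePred B] :
    ℕ → X → List (X × A) → ℝ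
  | 0, _, _ => 0
  | t + 1, x, h => if B x then 1 else
      ∑ a, pol h x (t + 1) a * ∑ x', P' x a x' * reachProb B t x' (h ++ [(x, a)])

lemma reachProb_succ_eq_eventProb [Fintype X] [Fintype A] (hP'1 : ∀ x a, ∑ x', P' x a x' = 1)
    (hpol1 : ∀ h x n, ∑ a, pol h x n a = 1) (B : X → Prop) [DecidablePred B] (t : ℕ)
    (x : X) (h : List (X × A)) :
    reachProb P' pol B (t + 1) x h = eventProb P' pol h t x (fun τ => ∃ k, B (τ k).1) := by
  induction t generalizing x h with
  | zero =>
    by_cases hx : B x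
    · simp [reachProb, eventProb_zero, hx, hpol1]
    · simp [reachProb, eventProb_zero, hx]
  | succ t ih =>
    by_cases hx : B x
    · rw [reachProb, if_pos hx, ← eventProb_true P' pol hP'1 hpol1 (t + 1) h x]
      refine Finset.sum_congr rfl fun τ _ => ?_
      congr 1
      exact propext ⟨fun hτ => ⟨hτ.1, 0, hτ.1 ▸ hx⟩, fun hτ => ⟨hτ.1, trivial⟩⟩
    · rw [reachProb, if_neg hx, eventProb_succ]
      simp only [ih, Fin.exists_fin_succ, Fin.cons_zero, Fin.cons_succ, hx, false_or]

end Trajectories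

lemma add_smul_mem_box {v r : Fin d → ℝ} {c b : ℝ} (hc0 : 0 ≤ c) (hc1 : c ≤ 1)
    (hr0 : ∀ i, 0 ≤ r i) (hr1 : ∀ i, r i ≤ 1) (hv : ∀ i, 0 ≤ v i ∧ v i ≤ b) (i : Fin d) :
    0 ≤ (v + c • r) i ∧ (v + c • r) i ≤ b + 1 := by
  simp only [Pi.add_apply, Pi.smul_apply, smul_eq_mul]
  have hcr : c * r i ≤ 1 := mul_le_one₀ hc1 (hr0 i) (hr1 i)
  exact ⟨add_nonneg (hv i).1 (mul_nonneg hc0 (hr0 i)), by linarith [(hv i).2]⟩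

section Values

variable [Fintype X] [Fintype A] (P' : X → A → X → ℝ) (R' : X → A → Fin d → ℝ) (γ : ℝ) (T : ℕ)
  (W : (Fin d → ℝ) → ℝ)

lemma Vstar_le [Nonempty A] (hP'0 : ∀ x a x', 0 ≤ P' x a x') (hP'1 : ∀ x a, ∑ x', P' x a x' = 1)
    (hR'0 : ∀ x a i, 0 ≤ R' x a i) (hR'1 : ∀ x a i, R' x a i ≤ 1) (hγ0 : 0 ≤ γ) (hγ1 : γ ≤ 1)
    {G : ℝ} (hW : ∀ v : Fin d → ℝ, (∀ i, 0 ≤ v i ∧ v i ≤ T) → W v ≤ G) (t : ℕ) (x : X)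
    (v : Fin d → ℝ) (hv : ∀ i, 0 ≤ v i ∧ v i ≤ T - t) :
    Vstar P' R' γ T W t x v ≤ G := by
  induction t generalizing x v with
  | zero => simpa [Vstar] using hW v (by simpa using hv)
  | succ t ih =>
    refine Finset.sup'_le _ _ fun a _ => ?_
    have hv' := add_smul_mem_box (pow_nonneg hγ0 (T - (t + 1))) (pow_le_one₀ hγ0 hγ1)
      (hR'0 x a) (hR'1 x a) hv
    calc ∑ x', P' x a x' * Vstar P' R' γ T W t x' (v + γ ^ (T - (t + 1)) • R' x a)
        ≤ ∑ x', P' x a x' * G := by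
          gcongr with x' _
          · exact hP'0 x a x'
          · refine ih x' _ fun i => ⟨(hv' i).1, ?_⟩
            push_cast at hv' ⊢
            linarith [(hv' i).2]
      _ = G := by rw [← Finset.sum_mul, hP'1, one_mul]

lemma Vpol_nonneg (hP'0 : ∀ x a x', 0 ≤ P' x a x') (hR'0 : ∀ x a i, 0 ≤ R' x a i)
    (hR'1 : ∀ x a i, R' x a i ≤ 1) (hγ0 : 0 ≤ γ) (hγ1 : γ ≤ 1)
    (hW : ∀ v : Fin d → ℝ, (∀ i, 0 ≤ v i ∧ v i ≤ T) → 0 ≤ W v)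
    (pol : List (X × A) → X → ℕ → A → ℝ) (hpol0 : ∀ h x n a, 0 ≤ pol h x n a) (t : ℕ) (x : X)
    (v : Fin d → ℝ) (h : List (X × A)) (hv : ∀ i, 0 ≤ v i ∧ v i ≤ T - t) :
    0 ≤ Vpol P' R' γ T W pol t x v h := by
  induction t generalizing x v h with
  | zero => simpa [Vpol] using hW v (by simpa using hv)
  | succ t ih =>
    refine Finset.sum_nonneg fun a _ => mul_nonneg (hpol0 _ _ _ _) ?_
    have hv' := add_smul_mem_box (pow_nonneg hγ0 (T - (t + 1))) (pow_le_one₀ hγ0 hγ1)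
      (hR'0 x a) (hR'1 x a) hv
    refine Finset.sum_nonneg fun x' _ =>
      mul_nonneg (hP'0 _ _ _) (ih x' _ _ fun i => ⟨(hv' i).1, ?_⟩)
    push_cast at hv' ⊢
    linarith [(hv' i).2]

noncomputable def greedyAction [Nonempty A] (t : ℕ) (x : X) (v : Fin d → ℝ) : A :=
  (Finset.exists_mem_eq_sup' Finset.univ_nonempty fun a : A =>
    ∑ x', P' x a x' * Vstar P' R' γ T W t x' (v + γ ^ (T - (t + 1)) • R' x a)).choose

lemma Vstar_succ_eq_greedyAction [Nonempty A] (t : ℕ) (x : X) (v : Fin d → ℝ) :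
    Vstar P' R' γ T W (t + 1) x v = ∑ x', P' x (greedyAction P' R' γ T W t x v) x' *
      Vstar P' R' γ T W t x' (v + γ ^ (T - (t + 1)) • R' x (greedyAction P' R' γ T W t x v)) :=
  (Finset.exists_mem_eq_sup' Finset.univ_nonempty _).choose_spec.2

end Values

/-- The reward vector that `Vstar` and `Vpol` carry after the history `h`: its `k`-th pair is
weighted by `γ ^ k`. -/
noncomputable def discountedReturn (R' : X → A → Fin d → ℝ) (γ : ℝ) : List (X × A) → Fin d → ℝ
  | [] => 0
  | (x, a) :: h => R' x a + γ • discountedReturn R' γ h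

lemma discountedReturn_append_singleton (R' : X → A → Fin d → ℝ) (γ : ℝ) (h : List (X × A))
    (x : X) (a : A) :
    discountedReturn R' γ (h ++ [(x, a)]) = discountedReturn R' γ h + γ ^ h.length • R' x a := by
  induction h with
  | nil => simp [discountedReturn]
  | cons y h ih =>
    simp only [List.cons_append, discountedReturn, ih, List.length_cons, pow_succ', smul_add,
      mul_smul, add_assoc]

lemma discountedReturn_mem_box {R' : X → A → Fin d → ℝ} (hR'0 : ∀ x a i, 0 ≤ R' x a i)
    (hR'1 : ∀ x a i, R' x a i ≤ 1) {γ : ℝ} (hγ0 : 0 ≤ γ) (hγ1 : γ ≤ 1) (h : List (X × A))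
    (i : Fin d) : 0 ≤ discountedReturn R' γ h i ∧ discountedReturn R' γ h i ≤ h.length := by
  induction h using List.reverseRecOn generalizing i with
  | nil => simp [discountedReturn]
  | append_singleton h y ih =>
    rw [discountedReturn_append_singleton, List.length_append, List.length_singleton]
    push_cast
    exact add_smul_mem_box (pow_nonneg hγ0 _) (pow_le_one₀ hγ0 hγ1) (hR'0 y.1 y.2) (hR'1 y.1 y.2)
      ih i

lemma RK_nonneg {S : Type} {R : S → A → Fin d → ℝ} {K : Finset S} (hR0 : ∀ s a i, 0 ≤ R s a i)
    (st : K ⊕ Unit) (a : A) (i : Fin d) :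
    0 ≤ RK R K st a i := by
  rcases st with s | _ <;> simp [RK, hR0]

lemma RK_le_one {S : Type} {R : S → A → Fin d → ℝ} {K : Finset S} (hR1 : ∀ s a i, R s a i ≤ 1)
    (st : K ⊕ Unit) (a : A) (i : Fin d) :
    RK R K st a i ≤ 1 := by
  rcases st with s | _ <;> simp [RK, hR1]

section Induced

variable {S : Type} [Fintype S] [DecidableEq S] {P : S → A → S → ℝ} {R : S → A → Fin d → ℝ}
  {γ : ℝ} {T : ℕ} {W : (Fin d → ℝ) → ℝ} {K : Finset S}

lemma PK_nonneg (hP0 : ∀ s a s', 0 ≤ P s a s') (st : K ⊕ Unit) (a : A) (st' : K ⊕ Unit) :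
    0 ≤ PK P K st a st' := by
  rcases st with s | _ <;> rcases st' with s' | _ <;> simp only [PK, zero_le_one, le_refl]
  · exact hP0 _ _ _
  · exact Finset.sum_nonneg fun _ _ => hP0 _ _ _

lemma sum_PK_inl_mul (s : K) (a : A) (g : K ⊕ Unit → ℝ) :
    ∑ st, PK P K (Sum.inl s) a st * g st =
      ∑ s' : K, P s a s' * g (Sum.inl s') + (∑ s' ∈ Kᶜ, P s a s') * g (Sum.inr ()) := by
  simp [Fintype.sum_sum_type, PK]

lemma sum_PK (hP1 : ∀ s a, ∑ s', P s a s' = 1) (st : K ⊕ Unit) (a : A) :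
    ∑ st', PK P K st a st' = 1 := by
  rcases st with s | _
  · have h := sum_PK_inl_mul (P := P) s a fun _ => 1
    simp only [mul_one] at h
    rw [h, Finset.sum_coe_sort K (P s a), Finset.sum_add_sum_compl, hP1]
  · simp [Fintype.sum_sum_type, PK]

lemma sum_mul_le_sum_PK_mul (hP0 : ∀ s a s', 0 ≤ P s a s') (s : K) (a : A) {f : S → ℝ}
    {g : K ⊕ Unit → ℝ} (hK : ∀ s' : K, f s' ≤ g (Sum.inl s'))
    (hKc : ∀ s' ∈ Kᶜ, f s' ≤ g (Sum.inr ())) :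
    ∑ s', P s a s' * f s' ≤ ∑ st, PK P K (Sum.inl s) a st * g st := by
  rw [sum_PK_inl_mul, ← Finset.sum_add_sum_compl K, ← Finset.sum_coe_sort K, Finset.sum_mul]
  gcongr with s' _ s' hs'
  · exact hP0 _ _ _
  · exact hK s'
  · exact hP0 _ _ _
  · exact hKc s' hs'

variable [Fintype A] {G : ℝ}

lemma Vstar_le_Vpol_exit_add_reachProb [Nonempty A] (hP0 : ∀ s a s', 0 ≤ P s a s')
    (hP1 : ∀ s a, ∑ s', P s a s' = 1) (hR0 : ∀ s a i, 0 ≤ R s a i) (hR1 : ∀ s a i, R s a i ≤ 1)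
    (hγ0 : 0 ≤ γ) (hγ1 : γ ≤ 1) (hW : ∀ v : Fin d → ℝ, (∀ i, 0 ≤ v i ∧ v i ≤ T) → 0 ≤ W v ∧ W v ≤ G)
    (pol : List ((K ⊕ Unit) × A) → K ⊕ Unit → ℕ → A → ℝ) (hpol0 : ∀ h st n a, 0 ≤ pol h st n a)
    (t : ℕ) (h : List ((K ⊕ Unit) × A)) (hh : h.length + t = T) (s' : S) :
    Vstar P R γ T W t s' (discountedReturn (RK R K) γ h) ≤
      Vpol (PK P K) (RK R K) γ T W pol t (Sum.inr ()) (discountedReturn (RK R K) γ h) h +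
        G * reachProb (PK P K) pol (· = Sum.inr ()) t (Sum.inr ()) h := by
  have hbox : ∀ i, 0 ≤ discountedReturn (RK R K) γ h i ∧
      discountedReturn (RK R K) γ h i ≤ (T : ℝ) - t := fun i => by
    have := discountedReturn_mem_box (RK_nonneg hR0) (RK_le_one hR1) hγ0 hγ1 h i
    rw [← hh]
    push_cast
    exact ⟨this.1, by linarith [this.2]⟩
  cases t with
  | zero => simp [Vstar, Vpol, reachProb]
  | succ t =>
    have hV := Vstar_le P R γ T W hP0 hP1 hR0 hR1 hγ0 hγ1 (fun v hv => (hW v hv).2) (t + 1) s' _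
      hbox
    have hVK := Vpol_nonneg (PK P K) (RK R K) γ T W (PK_nonneg hP0) (RK_nonneg hR0)
      (RK_le_one hR1) hγ0 hγ1 (fun v hv => (hW v hv).1) pol hpol0 (t + 1) (Sum.inr ()) _ h hbox
    rw [reachProb, if_pos rfl]
    linarith

variable (P R γ T W K) in
noncomputable def greedyOnKnown [Nonempty A] : List ((K ⊕ Unit) × A) → K ⊕ Unit → ℕ → A
  | h, Sum.inl s, n => greedyAction P R γ T W (n - 1) s (discountedReturn (RK R K) γ h)
  | _, Sum.inr (), _ => Classical.arbitrary A

lemma Vstar_le_Vpol_greedyOnKnown_add_reachProb [Nonempty A] [DecidableEq A]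
    (hP0 : ∀ s a s', 0 ≤ P s a s') (hP1 : ∀ s a, ∑ s', P s a s' = 1)
    (hR0 : ∀ s a i, 0 ≤ R s a i) (hR1 : ∀ s a i, R s a i ≤ 1) (hγ0 : 0 ≤ γ) (hγ1 : γ ≤ 1)
    (hW : ∀ v : Fin d → ℝ, (∀ i, 0 ≤ v i ∧ v i ≤ T) → 0 ≤ W v ∧ W v ≤ G)
    (t : ℕ) (h : List ((K ⊕ Unit) × A)) (hh : h.length + t = T) (s : K) :
    Vstar P R γ T W t s (discountedReturn (RK R K) γ h) ≤
      Vpol (PK P K) (RK R K) γ T W (detPolicy (greedyOnKnown P R γ T W K)) t (Sum.inl s)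
          (discountedReturn (RK R K) γ h) h +
        G * reachProb (PK P K) (detPolicy (greedyOnKnown P R γ T W K)) (· = Sum.inr ()) t
          (Sum.inl s) h := by
  induction t generalizing h s with
  | zero => simp [Vstar, Vpol, reachProb]
  | succ t ih =>
    set π := detPolicy (greedyOnKnown P R γ T W K)
    set a := greedyAction P R γ T W t s (discountedReturn (RK R K) γ h)
    set h' := h ++ [(Sum.inl s, a)]
    have hret : ∀ st b, discountedReturn (RK R K) γ h + γ ^ (T - (t + 1)) • RK R K st b =
        discountedReturn (RK R K) γ (h ++ [(st, b)]) := fun st b => by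
      rw [discountedReturn_append_singleton, show T - (t + 1) = h.length by omega]
    calc Vstar P R γ T W (t + 1) s (discountedReturn (RK R K) γ h)
        = ∑ s', P s a s' * Vstar P R γ T W t s' (discountedReturn (RK R K) γ h') := by
          rw [Vstar_succ_eq_greedyAction, ← hret]; rfl
      _ ≤ ∑ st, PK P K (Sum.inl s) a st *
            (Vpol (PK P K) (RK R K) γ T W π t st (discountedReturn (RK R K) γ h') h' +
              G * reachProb (PK P K) π (· = Sum.inr ()) t st h') :=
          sum_mul_le_sum_PK_mul hP0 s a (fun s' => ih h' (by simp [h']; omega) s')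
            (fun s' _ => Vstar_le_Vpol_exit_add_reachProb hP0 hP1 hR0 hR1 hγ0 hγ1 hW π
              (detPolicy_nonneg _) t h' (by simp [h']; omega) s')
      _ = _ := by
        rw [Vpol, reachProb, if_neg Sum.inl_ne_inr, sum_detPolicy_mul, sum_detPolicy_mul,
          Finset.mul_sum, ← Finset.sum_add_distrib]
        refine Finset.sum_congr rfl fun st _ => ?_
        simp only [greedyOnKnown, Nat.add_sub_cancel, hret]
        ring

end Induced

end MOMDP

open MOMDP

open Classical in
theorem explore_or_exploit_general {S A : Type} [Fintype S] [Fintype A]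
    [Nonempty A] [DecidableEq S] {d : ℕ}
    (P : S → A → S → ℝ) (hP0 : ∀ s a s', 0 ≤ P s a s') (hP1 : ∀ s a, ∑ s', P s a s' = 1)
    (R : S → A → Fin d → ℝ) (hR0 : ∀ s a i, 0 ≤ R s a i) (hR1 : ∀ s a i, R s a i ≤ 1)
    (γ : ℝ) (hγ0 : 0 ≤ γ) (hγ1 : γ < 1) (T : ℕ) (hT : 1 ≤ T)
    (W : (Fin d → ℝ) → ℝ) (G : ℝ) (hG : 0 < G)
    (hWbd : ∀ x : Fin d → ℝ, (∀ i, 0 ≤ x i ∧ x i ≤ T) → 0 ≤ W x ∧ W x ≤ G)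
    (K : Finset S) (s : S) (hs : s ∈ K)
    (α : ℝ) :
    (∃ pol : List ((↥K ⊕ Unit) × A) → (↥K ⊕ Unit) → ℕ → A → ℝ,
      (∀ h st t a, 0 ≤ pol h st t a) ∧ (∀ h st t, ∑ a, pol h st t a = 1) ∧
      Vpol (PK P K) (RK R K) γ T W pol T (Sum.inl ⟨s, hs⟩) 0 [] ≥
        Vstar P R γ T W T s 0 - α) ∨
    (∃ pol : List ((↥K ⊕ Unit) × A) → (↥K ⊕ Unit) → ℕ → A → ℝ,
      (∀ h st t a, 0 ≤ pol h st t a) ∧ (∀ h st t, ∑ a, pol h st t a = 1) ∧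
      (∑ τ : Fin T → (↥K ⊕ Unit) × A,
        (if (τ ⟨0, hT⟩).1 = Sum.inl ⟨s, hs⟩ ∧ (∃ k : Fin T, (τ k).1 = Sum.inr ())
          then PrTraj (PK P K) pol [] T (List.ofFn τ) else 0)) > α / G) := by
  obtain ⟨t, rfl⟩ : ∃ t, T = t + 1 := ⟨T - 1, by omega⟩
  set π := detPolicy (greedyOnKnown P R γ (t + 1) W K)
  have hπ0 := detPolicy_nonneg (greedyOnKnown P R γ (t + 1) W K)
  have hπ1 := sum_detPolicy (greedyOnKnown P R γ (t + 1) W K)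
  set ρ := reachProb (PK P K) π (· = Sum.inr ()) (t + 1) (Sum.inl ⟨s, hs⟩) [] with hρ
  have hvalue : Vstar P R γ (t + 1) W (t + 1) s 0 ≤
      Vpol (PK P K) (RK R K) γ (t + 1) W π (t + 1) (Sum.inl ⟨s, hs⟩) 0 [] + G * ρ :=
    Vstar_le_Vpol_greedyOnKnown_add_reachProb hP0 hP1 hR0 hR1 hγ0 hγ1.le hWbd (t + 1) []
      (zero_add _) ⟨s, hs⟩
  rcases le_or_gt ρ (α / G) with hstay | hescape
  · refine Or.inl ⟨π, hπ0, hπ1, ?_⟩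
    linarith [(le_div_iff₀' hG).1 hstay]
  · refine Or.inr ⟨π, hπ0, hπ1, ?_⟩
    rw [hρ, reachProb_succ_eq_eventProb _ _ (sum_PK hP1) hπ1] at hescape
    refine hescape.trans_eq ?_
    simp only [eventProb, Fin.mk_zero]
    -- the two sums differ only in the `Decidable` instances of their conditions
    exact Finset.sum_congr rfl fun τ _ => by congr

open Classical in
/-- Explore-or-Exploit Lemma.  Let `K ⊆ S`, `s ∈ K`, `T ≥ 1`, and
`0 ≤ W x ≤ G` whenever `0 ≤ x i ≤ T` for all `i`.  Then for every `0 < α < 1`, either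
(i) some history-dependent policy on the induced MOMDP `M_K` achieves
`V^π_{M_K}(s, 0, [], T) ≥ V*_M(s, 0, T) − α`; or (ii) some history-dependent policy on
`M_K` reaches the absorbing exit state `⊥` within `T` steps with probability
exceeding `α/G`. -/
theorem explore_or_exploit {S A : Type} [Fintype S] [Fintype A]
    [Nonempty S] [Nonempty A] [DecidableEq S] {d : ℕ} (hd : 1 ≤ d)
    (P : S → A → S → ℝ) (hP0 : ∀ s a s', 0 ≤ P s a s') (hP1 : ∀ s a, ∑ s', P s a s' = 1)
    (R : S → A → Fin d → ℝ) (hR0 : ∀ s a i, 0 ≤ R s a i) (hR1 : ∀ s a i, R s a i ≤ 1)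
    (γ : ℝ) (hγ0 : 0 ≤ γ) (hγ1 : γ < 1) (T : ℕ) (hT : 1 ≤ T)
    (W : (Fin d → ℝ) → ℝ) (G : ℝ) (hG : 0 < G)
    (hWbd : ∀ x : Fin d → ℝ, (∀ i, 0 ≤ x i ∧ x i ≤ T) → 0 ≤ W x ∧ W x ≤ G)
    (K : Finset S) (s : S) (hs : s ∈ K)
    (α : ℝ) (hα0 : 0 < α) (hα1 : α < 1) :
    (∃ pol : List ((↥K ⊕ Unit) × A) → (↥K ⊕ Unit) → ℕ → A → ℝ,
      (∀ h st t a, 0 ≤ pol h st t a) ∧ (∀ h st t, ∑ a, pol h st t a = 1) ∧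
      Vpol (PK P K) (RK R K) γ T W pol T (Sum.inl ⟨s, hs⟩) 0 [] ≥
        Vstar P R γ T W T s 0 - α) ∨
    (∃ pol : List ((↥K ⊕ Unit) × A) → (↥K ⊕ Unit) → ℕ → A → ℝ,
      (∀ h st t a, 0 ≤ pol h st t a) ∧ (∀ h st t, ∑ a, pol h st t a = 1) ∧
      (∑ τ : Fin T → (↥K ⊕ Unit) × A,
        (if (τ ⟨0, hT⟩).1 = Sum.inl ⟨s, hs⟩ ∧ (∃ k : Fin T, (τ k).1 = Sum.inr ())
          then PrTraj (PK P K) pol [] T (List.ofFn τ) else 0)) > α / G) :=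
  explore_or_exploit_general P hP0 hP1 R hR0 hR1 γ hγ0 hγ1 T hT W G hG hWbd K s hs α
end
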